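/- arXiv:2409.02063 — 4 statements merged into one kernel-verified Lean document; each statement's English description precedes it below -/
import Mathlib

section
/- For every natural number n ≥ 2, the line swap strategy on the path graph P_n, run for n−2 layers, reaches full connectivity: for every pair of distinct logical qubits a ≠ b in {0,…,n−1} there exists a time t with 0 ≤ t ≤ n−2 such that the positions σ_t(a) and σ_t(b) are adjacent in P_n (i.e., |σ_t(a) − σ_t(b)| = 1). -/
/-!
Under the line strategy a qubit starting at an even position moves right and one starting at an
odd position moves left, one step per layer, turning back at the ends of the line. This gives a
closed form for every trajectory, from which one reads off, for any two qubits, a time `t ≤ n - 2`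
at which they pass each other and so are adjacent.
-/

/-- Adjacency in the path graph `Pₙ` on vertices `{0, …, n-1}`:
two positions are adjacent iff they differ by exactly 1. -/
def PathAdj (n : ℕ) (a b : Fin n) : Prop :=
  a.1 + 1 = b.1 ∨ b.1 + 1 = a.1

/-- The list of transpositions making up layer `t` (0-indexed) of the line swap
strategy on `Pₙ`: layer `t` is the product of the transpositions `(i, i+1)` over all
`i` with `i % 2 = t % 2` and `i + 1 ≤ n - 1` (so the even layer `E` comes first,
then the odd layer `O`, alternating). -/
def lineSwapList (n t : ℕ) : List (Equiv.Perm (Fin n)) :=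
  (List.range n).filterMap (fun i =>
    if h : i % 2 = t % 2 ∧ i + 1 < n then
      some (Equiv.swap ⟨i, Nat.lt_of_succ_lt h.2⟩ ⟨i + 1, h.2⟩)
    else none)

/-- Layer `t` of the line swap strategy (a product of disjoint transpositions). -/
def lineLayer (n t : ℕ) : Equiv.Perm (Fin n) :=
  (lineSwapList n t).prod

/-- Cumulative permutations of a swap strategy: `σ₀ = id` and `σ_{t+1} = π_{t+1} ∘ σ_t`,
where `layers t` is the `(t+1)`-st layer `π_{t+1}`. -/
def cumul {V : Type*} (layers : ℕ → Equiv.Perm V) : ℕ → Equiv.Perm V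
  | 0 => 1
  | t + 1 => layers t * cumul layers t

theorem PathAdj.symm {n : ℕ} {a b : Fin n} (h : PathAdj n a b) : PathAdj n b a :=
  Or.symm h

theorem val_swap_succ_apply {n k : ℕ} (hk : k < n) (hk' : k + 1 < n) (x : Fin n) :
    (Equiv.swap (⟨k, hk⟩ : Fin n) ⟨k + 1, hk'⟩ x).1 =
      if x.1 = k then k + 1 else if x.1 = k + 1 then k else x.1 := by
  simp only [Equiv.swap_apply_def, Fin.ext_iff]
  split_ifs <;> rfl

/-- Layer `t` truncated to its swaps at positions `i < k`. -/
theorem val_prod_lineSwaps_range_apply (n t k : ℕ) (x : Fin n) :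
    (((List.range k).filterMap (fun i =>
      if h : i % 2 = t % 2 ∧ i + 1 < n then
        some (Equiv.swap (⟨i, Nat.lt_of_succ_lt h.2⟩ : Fin n) ⟨i + 1, h.2⟩)
      else none)).prod x).1 =
      if x.1 % 2 = t % 2 ∧ x.1 + 1 < n ∧ x.1 < k then x.1 + 1
      else if 0 < x.1 ∧ (x.1 - 1) % 2 = t % 2 ∧ x.1 - 1 < k then x.1 - 1
      else x.1 := by
  induction k generalizing x with
  | zero => simp
  | succ k ih =>
    rw [List.range_succ, List.filterMap_append, List.prod_append]
    simp only [List.filterMap_cons, List.filterMap_nil]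
    by_cases hswap : k % 2 = t % 2 ∧ k + 1 < n
    · rw [dif_pos hswap, List.prod_singleton, Equiv.Perm.mul_apply, ih, val_swap_succ_apply]
      split_ifs <;> omega
    · rw [dif_neg hswap, List.prod_nil, mul_one, ih]
      split_ifs <;> omega

theorem val_lineLayer_apply (n t : ℕ) (x : Fin n) :
    (lineLayer n t x).1 =
      if x.1 % 2 = t % 2 ∧ x.1 + 1 < n then x.1 + 1
      else if 0 < x.1 ∧ (x.1 - 1) % 2 = t % 2 then x.1 - 1
      else x.1 := by
  rw [lineLayer, lineSwapList, val_prod_lineSwaps_range_apply]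
  split_ifs <;> omega

/-- Position at time `t` of the qubit starting at `c`; on reaching an end of the line a qubit
stays there for one layer before turning back. -/
def lineTrajectory (n c t : ℕ) : ℕ :=
  if c % 2 = 0 then (if t ≤ n - 1 - c then c + t else 2 * n - 1 - c - t)
  else (if t ≤ c then c - t else t - c - 1)

theorem val_cumul_lineLayer_apply {n t : ℕ} (ht : t ≤ n) (c : Fin n) :
    (cumul (lineLayer n) t c).1 = lineTrajectory n c t := by
  induction t with
  | zero => simp only [cumul, Equiv.Perm.coe_one, id, lineTrajectory]; split_ifs <;> omega
  | succ t ih =>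
    have hpos := (cumul (lineLayer n) t c).isLt
    rw [ih (by omega)] at hpos
    rw [cumul, Equiv.Perm.mul_apply, val_lineLayer_apply, ih (by omega)]
    unfold lineTrajectory at hpos ⊢
    split_ifs at hpos ⊢ <;> omega

theorem exists_lineTrajectory_adjacent {n A B : ℕ} (hAB : A < B) (hB : B < n) :
    ∃ t ≤ n - 2, lineTrajectory n A t + 1 = lineTrajectory n B t ∨
      lineTrajectory n B t + 1 = lineTrajectory n A t := by
  by_cases hadj : B = A + 1
  · exact ⟨0, by omega, by unfold lineTrajectory; split_ifs <;> omega⟩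
  -- Qubits moving towards each other meet after `(B - A - 1) / 2` layers; in the other cases
  -- they meet once one or both have turned back at an end of the line.
  rcases Nat.mod_two_eq_zero_or_one A with hA | hA <;>
    rcases Nat.mod_two_eq_zero_or_one B with hB2 | hB2
  · exact ⟨n - 1 - (A + B) / 2, by omega, by unfold lineTrajectory; split_ifs <;> omega⟩
  · exact ⟨(B - A - 1) / 2, by omega, by unfold lineTrajectory; split_ifs <;> omega⟩
  · exact ⟨n - 1 - (B - A - 1) / 2, by omega, by unfold lineTrajectory; split_ifs <;> omega⟩
  · exact ⟨(A + B) / 2, by omega, by unfold lineTrajectory; split_ifs <;> omega⟩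

theorem exists_pathAdj_cumul_lineLayer_of_lt {n : ℕ} {a b : Fin n} (hab : a < b) :
    ∃ t ≤ n - 2, PathAdj n (cumul (lineLayer n) t a) (cumul (lineLayer n) t b) := by
  obtain ⟨t, ht, hadj⟩ := exists_lineTrajectory_adjacent hab b.isLt
  refine ⟨t, ht, ?_⟩
  rwa [PathAdj, val_cumul_lineLayer_apply (by omega), val_cumul_lineLayer_apply (by omega)]

theorem line_strategy_reaches_full_connectivity_general (n : ℕ) :
    ∀ a b : Fin n, a ≠ b → ∃ t ≤ n - 2,
      PathAdj n (cumul (lineLayer n) t a) (cumul (lineLayer n) t b) := by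
  intro a b hab
  rcases hab.lt_or_gt with hlt | hgt
  · exact exists_pathAdj_cumul_lineLayer_of_lt hlt
  · obtain ⟨t, ht, hadj⟩ := exists_pathAdj_cumul_lineLayer_of_lt hgt
    exact ⟨t, ht, hadj.symm⟩

/-- For every `n ≥ 2`, the line swap strategy on `Pₙ`, run for `n - 2`
layers, reaches full connectivity: for every pair of distinct logical qubits `a ≠ b`
there is a time `t ≤ n - 2` such that `σ_t a` and `σ_t b` are adjacent in `Pₙ`. -/
theorem line_strategy_reaches_full_connectivity (n : ℕ) (hn : 2 ≤ n) :
    ∀ a b : Fin n, a ≠ b → ∃ t ≤ n - 2,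
      PathAdj n (cumul (lineLayer n) t a) (cumul (lineLayer n) t b) :=
  line_strategy_reaches_full_connectivity_general n
end

section
/- For every natural number n ≥ 2, every swap strategy on the path graph P_n that reaches full connectivity consists of at least n−2 swap layers; hence the alternating odd/even line swap strategy, which uses exactly n−2 layers, is optimal in the number of layers. -/
/-- A swap layer on the path graph `Pₙ`: a permutation of the vertices that is a
product of transpositions over pairwise vertex-disjoint edges, i.e. an involution
moving every non-fixed vertex to an adjacent vertex. -/
def IsPathSwapLayer (n : ℕ) (π : Equiv.Perm (Fin n)) : Prop :=
  π * π = 1 ∧ ∀ v : Fin n, π v ≠ v → PathAdj n v (π v)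

/-!
Follow the qubit `a` that starts at vertex `0`; it has to meet each of the other `n - 1` qubits.
A qubit `b` starting to the right of `a` can only stand to the left of `a` after swapping places
with it, and a swap on the path needs the two to be adjacent. So the first meeting of `a` and `b`
has `b` as the right neighbour of `a`. At each of the `k + 1` times `a` has at most one right
neighbour, hence `n - 1 ≤ k + 1`.
-/

open Finset

instance (n : ℕ) : DecidableRel (PathAdj n) := fun a b => by
  unfold PathAdj
  infer_instance

theorem IsPathSwapLayer.moves_by_at_most_one {n : ℕ} {π : Equiv.Perm (Fin n)}
    (hπ : IsPathSwapLayer n π) (v : Fin n) : (π v).1 ≤ v.1 + 1 ∧ v.1 ≤ (π v).1 + 1 := by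
  by_cases hv : π v = v
  · rw [hv]; omega
  · rcases hπ.2 v hv with h | h <;> omega

theorem cumul_succ_apply {V : Type*} (layers : ℕ → Equiv.Perm V) (t : ℕ) (v : V) :
    cumul layers (t + 1) v = layers t (cumul layers t v) :=
  rfl

section PathStrategy

variable {n k : ℕ} {layers : ℕ → Equiv.Perm (Fin n)}

theorem exists_pathAdj_of_order_swap (hlayers : ∀ t < k, IsPathSwapLayer n (layers t))
    {a b : Fin n} (hab : a < b) {t : ℕ} (ht : t ≤ k)
    (hswap : cumul layers t b < cumul layers t a) :
    ∃ s < t, PathAdj n (cumul layers s a) (cumul layers s b) := by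
  induction t with
  | zero => exact absurd hab (not_lt.2 hswap.le)
  | succ t ih =>
    rcases lt_or_gt_of_ne ((cumul layers t).injective.ne hab.ne) with hbefore | hbefore
    · have hmove := (hlayers t ht).moves_by_at_most_one
      have ha := hmove (cumul layers t a)
      have hb := hmove (cumul layers t b)
      rw [cumul_succ_apply, cumul_succ_apply, Fin.lt_def] at hswap
      rw [Fin.lt_def] at hbefore
      exact ⟨t, t.lt_succ_self, Or.inl (by omega)⟩
    · obtain ⟨s, hs, hadj⟩ := ih (by omega) hbefore
      exact ⟨s, by omega, hadj⟩

theorem exists_right_neighbor_of_pathAdj (hlayers : ∀ t < k, IsPathSwapLayer n (layers t))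
    {a b : Fin n} (hab : a < b) {s : ℕ} (hs : s ≤ k)
    (hadj : PathAdj n (cumul layers s a) (cumul layers s b)) :
    ∃ r ≤ s, (cumul layers r a).1 + 1 = (cumul layers r b).1 := by
  induction s using Nat.strong_induction_on with
  | _ s ih =>
    rcases hadj with hright | hleft
    · exact ⟨s, le_rfl, hright⟩
    · obtain ⟨s', hs', hadj'⟩ :=
        exists_pathAdj_of_order_swap hlayers hab hs (Fin.lt_def.2 (by omega))
      obtain ⟨r, hr, hright⟩ := ih s' hs' (by omega) hadj'
      exact ⟨r, by omega, hright⟩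

theorem card_met_Ioi_le (hlayers : ∀ t < k, IsPathSwapLayer n (layers t)) (a : Fin n) :
    #((Ioi a).filter fun b => ∃ t ≤ k, PathAdj n (cumul layers t a) (cumul layers t b)) ≤
      k + 1 := by
  let rightNeighbor (r : ℕ) : Finset (Fin n) :=
    univ.filter fun b => (cumul layers r a).1 + 1 = (cumul layers r b).1
  have hsub : ((Ioi a).filter fun b => ∃ t ≤ k,
      PathAdj n (cumul layers t a) (cumul layers t b)) ⊆ (range (k + 1)).biUnion rightNeighbor := by
    intro b hb
    obtain ⟨hab, t, ht, hadj⟩ := mem_filter.1 hb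
    obtain ⟨r, hr, hright⟩ := exists_right_neighbor_of_pathAdj hlayers (mem_Ioi.1 hab) ht hadj
    exact mem_biUnion.2 ⟨r, mem_range.2 (by omega), mem_filter.2 ⟨mem_univ b, hright⟩⟩
  have hunique (r : ℕ) : #(rightNeighbor r) ≤ 1 := by
    refine card_le_one.2 fun b hb c hc => (cumul layers r).injective (Fin.ext ?_)
    have hb' := (mem_filter.1 hb).2
    have hc' := (mem_filter.1 hc).2
    omega
  calc _ ≤ #((range (k + 1)).biUnion rightNeighbor) := card_le_card hsub
    _ ≤ #(range (k + 1)) * 1 := card_biUnion_le_card_mul _ _ _ fun r _ => hunique r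
    _ = k + 1 := by simp

end PathStrategy

/-- For every `n ≥ 2`, every swap strategy on the path graph `Pₙ`
that reaches full connectivity consists of at least `n - 2` swap layers. -/
theorem line_strategy_optimal (n : ℕ) (hn : 2 ≤ n) (k : ℕ)
    (layers : ℕ → Equiv.Perm (Fin n))
    (hlayers : ∀ t < k, IsPathSwapLayer n (layers t))
    (hfull : ∀ a b : Fin n, a ≠ b → ∃ t ≤ k,
      PathAdj n (cumul layers t a) (cumul layers t b)) :
    n - 2 ≤ k := by
  let a : Fin n := ⟨0, by omega⟩
  have hmeets_all : ((Ioi a).filter fun b => ∃ t ≤ k,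
      PathAdj n (cumul layers t a) (cumul layers t b)) = Ioi a :=
    filter_true_of_mem fun b hb => hfull a b (mem_Ioi.1 hb).ne
  have hcard := card_met_Ioi_le hlayers a
  rw [hmeets_all, Fin.card_Ioi] at hcard
  simp only [a] at hcard
  omega
end

section
/- For every natural number B ≥ 2, the busNNN swap strategy run for 4B−5 layers reaches full connectivity in the busNNN column model: for every pair of distinct columns a ≠ b in {0,…,2B−1} there exists a layer-time t with 0 ≤ t ≤ 4B−5 such that the positions σ_t(a) and σ_t(b) lie on the same bus, i.e., {σ_t(a), σ_t(b)} = {2j, 2j+1} for some j ∈ {0,…,B−1}, where σ_t is the cumulative permutation after the first t layers (σ₀ = id). -/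
/-!
The intra-bus layer `A` only exchanges columns within a bus, so the pairs sharing a bus after
`2c + 1` layers are those sharing a bus after `2c + 2` layers, and `σ_{2c} = (A ∘ I)^c`.
The rotation `A ∘ I` fixes position `2B - 1` and moves the other `2B - 1` positions along the cycle
`0 → 1 → 3 → ⋯ → 2B-3 → 2B-2 → 2B-4 → ⋯ → 2 → 0`. In coordinates `ZMod (2B - 1)` along this cycle
it adds `1`, two distinct cycle positions share a bus iff their coordinates add up to `1`, and the
fixed position shares its bus with position `2B - 2`. As `2` is invertible modulo `2B - 1`, every
pair of columns meets after some `c < 2B - 1` rotations, hence after `2c - 1 ≤ 4B - 5` layers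
(or none, if `c = 0`).
-/

/-- The inter-bus layer `I` on the `2B` positions of the busNNN column model:
the product of the transpositions `(2j+1, 2j+2)` for `j = 0, …, B-2`. -/
def interLayer (B : ℕ) : Equiv.Perm (Fin (2 * B)) :=
  ((List.range (B - 1)).attach.map (fun j =>
    Equiv.swap ⟨2 * j.1 + 1, by have := List.mem_range.mp j.2; omega⟩
               ⟨2 * j.1 + 2, by have := List.mem_range.mp j.2; omega⟩)).prod

/-- The intra-bus layer `A` on the `2B` positions of the busNNN column model:
the product of the transpositions `(2j, 2j+1)` for `j = 0, …, B-2`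
(i.e. on every bus except the last). -/
def intraLayer (B : ℕ) : Equiv.Perm (Fin (2 * B)) :=
  ((List.range (B - 1)).attach.map (fun j =>
    Equiv.swap ⟨2 * j.1, by have := List.mem_range.mp j.2; omega⟩
               ⟨2 * j.1 + 1, by have := List.mem_range.mp j.2; omega⟩)).prod

/-- The layers of the busNNN swap strategy: `I, A, I, A, …`, starting with `I`
(`busLayers B t` is the `(t+1)`-st layer `π_{t+1}`). -/
def busLayers (B : ℕ) (t : ℕ) : Equiv.Perm (Fin (2 * B)) :=
  if t % 2 = 0 then interLayer B else intraLayer B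

/-- The positions `x` and `y` together occupy bus `j`, i.e. `{x, y} = {2j, 2j+1}`. -/
def OnBus (B j : ℕ) (x y : Fin (2 * B)) : Prop :=
  (x.1 = 2 * j ∧ y.1 = 2 * j + 1) ∨ (x.1 = 2 * j + 1 ∧ y.1 = 2 * j)

open Equiv

def pairSwap (m s j : ℕ) : Perm (Fin m) :=
  if h : 2 * j + s + 1 < m then swap ⟨2 * j + s, by omega⟩ ⟨2 * j + s + 1, h⟩ else 1

lemma prod_pairSwap_apply_val {m s n : ℕ} (hn : 2 * n + s ≤ m) (x : Fin m) :
    (((List.range n).map (pairSwap m s)).prod x).1 =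
      if s ≤ x.1 ∧ x.1 < 2 * n + s then (if (x.1 - s) % 2 = 0 then x.1 + 1 else x.1 - 1)
      else x.1 := by
  induction n generalizing x with
  | zero => simp
  | succ n ih =>
    rw [List.range_succ, List.map_append, List.prod_append, List.map_singleton,
      List.prod_singleton, Perm.mul_apply, pairSwap, dif_pos (by omega)]
    by_cases hx₀ : x.1 = 2 * n + s
    · rw [show x = ⟨2 * n + s, by omega⟩ from Fin.ext hx₀, swap_apply_left, ih (by omega)]
      dsimp only
      split_ifs <;> omega
    by_cases hx₁ : x.1 = 2 * n + s + 1
    · rw [show x = ⟨2 * n + s + 1, by omega⟩ from Fin.ext hx₁, swap_apply_right, ih (by omega)]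
      dsimp only
      split_ifs <;> omega
    rw [swap_apply_of_ne_of_ne (by simp [Fin.ext_iff, hx₀]) (by simp [Fin.ext_iff, hx₁]),
      ih (by omega)]
    split_ifs <;> omega

lemma interLayer_eq_prod_pairSwap (B : ℕ) :
    interLayer B = ((List.range (B - 1)).map (pairSwap (2 * B) 1)).prod := by
  rw [interLayer, ← List.attach_map_val (f := pairSwap (2 * B) 1)]
  congr 1
  refine List.map_congr_left fun j _ => ?_
  have := List.mem_range.mp j.2
  rw [pairSwap, dif_pos (by omega)]

lemma intraLayer_eq_prod_pairSwap (B : ℕ) :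
    intraLayer B = ((List.range (B - 1)).map (pairSwap (2 * B) 0)).prod := by
  rw [intraLayer, ← List.attach_map_val (f := pairSwap (2 * B) 0)]
  congr 1
  refine List.map_congr_left fun j _ => ?_
  have := List.mem_range.mp j.2
  rw [pairSwap, dif_pos (by omega)]
  rfl

lemma interLayer_apply_val {B : ℕ} (x : Fin (2 * B)) :
    (interLayer B x).1 =
      if 1 ≤ x.1 ∧ x.1 + 1 < 2 * B then (if x.1 % 2 = 1 then x.1 + 1 else x.1 - 1) else x.1 := by
  have := x.2
  rw [interLayer_eq_prod_pairSwap, prod_pairSwap_apply_val (by omega)]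
  split_ifs <;> omega

lemma intraLayer_apply_val {B : ℕ} (x : Fin (2 * B)) :
    (intraLayer B x).1 =
      if x.1 + 2 < 2 * B then (if x.1 % 2 = 0 then x.1 + 1 else x.1 - 1) else x.1 := by
  have := x.2
  rw [intraLayer_eq_prod_pairSwap, prod_pairSwap_apply_val (by omega)]
  split_ifs <;> omega

lemma onBus_intraLayer_iff {B j : ℕ} {x y : Fin (2 * B)} :
    OnBus B j (intraLayer B x) (intraLayer B y) ↔ OnBus B j x y := by
  simp only [OnBus, intraLayer_apply_val]
  split_ifs <;> omega

lemma OnBus.symm {B j : ℕ} {x y : Fin (2 * B)} (h : OnBus B j x y) : OnBus B j y x := by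
  unfold OnBus at h ⊢
  omega

def busRotation (B : ℕ) : Perm (Fin (2 * B)) := intraLayer B * interLayer B

lemma cumul_busLayers_two_mul_add_two (B c : ℕ) :
    cumul (busLayers B) (2 * c + 2) = intraLayer B * cumul (busLayers B) (2 * c + 1) := by
  rw [cumul.eq_2, busLayers, if_neg (by omega)]

lemma cumul_busLayers_two_mul (B c : ℕ) :
    cumul (busLayers B) (2 * c) = busRotation B ^ c := by
  induction c with
  | zero => rfl
  | succ c ih =>
    rw [mul_add_one, cumul_busLayers_two_mul_add_two, cumul.eq_2, busLayers, if_pos (by omega), ih,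
      pow_succ', busRotation, mul_assoc]

lemma onBus_cumul_busLayers_odd_iff {B j c : ℕ} {a b : Fin (2 * B)} :
    OnBus B j (cumul (busLayers B) (2 * c + 1) a) (cumul (busLayers B) (2 * c + 1) b) ↔
      OnBus B j ((busRotation B ^ (c + 1)) a) ((busRotation B ^ (c + 1)) b) := by
  rw [← cumul_busLayers_two_mul, mul_add_one, cumul_busLayers_two_mul_add_two, Perm.mul_apply,
    Perm.mul_apply, onBus_intraLayer_iff]

lemma busRotation_apply_last {B : ℕ} {x : Fin (2 * B)} (hx : x.1 + 1 = 2 * B) :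
    busRotation B x = x := by
  ext
  simp only [busRotation, Perm.mul_apply, intraLayer_apply_val, interLayer_apply_val]
  split_ifs <;> omega

lemma busRotation_apply_val_lt {B : ℕ} {x : Fin (2 * B)} (hx : x.1 + 1 < 2 * B) :
    (busRotation B x).1 + 1 < 2 * B := by
  simp only [busRotation, Perm.mul_apply, intraLayer_apply_val, interLayer_apply_val]
  split_ifs <;> omega

def ringIndex (B x : ℕ) : ℕ :=
  if x % 2 = 1 then (x + 1) / 2 else if x = 0 then 0 else 2 * B - 1 - x / 2

lemma ringIndex_lt {B x : ℕ} (hx : x + 1 < 2 * B) : ringIndex B x < 2 * B - 1 := by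
  unfold ringIndex
  split_ifs <;> omega

lemma ringIndex_busRotation {B : ℕ} {x : Fin (2 * B)} (hx : x.1 + 1 < 2 * B) :
    ringIndex B (busRotation B x).1 =
      if ringIndex B x.1 + 2 = 2 * B then 0 else ringIndex B x.1 + 1 := by
  simp only [ringIndex, busRotation, Perm.mul_apply, intraLayer_apply_val, interLayer_apply_val]
  split_ifs <;> omega

def ringCoord (B : ℕ) (x : Fin (2 * B)) : ZMod (2 * B - 1) := ringIndex B x.1

lemma ringCoord_busRotation {B : ℕ} {x : Fin (2 * B)} (hx : x.1 + 1 < 2 * B) :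
    ringCoord B (busRotation B x) = ringCoord B x + 1 := by
  rw [ringCoord, ringCoord, ringIndex_busRotation hx]
  split_ifs with hwrap
  · rw [Nat.cast_zero, ← Nat.cast_add_one, show ringIndex B x.1 + 1 = 2 * B - 1 by omega,
      ZMod.natCast_self]
  · push_cast
    rfl

lemma busRotation_pow_apply_val_lt {B : ℕ} {x : Fin (2 * B)} (hx : x.1 + 1 < 2 * B) (c : ℕ) :
    ((busRotation B ^ c) x).1 + 1 < 2 * B := by
  induction c with
  | zero => exact hx
  | succ c ih =>
    rw [pow_succ', Perm.mul_apply]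
    exact busRotation_apply_val_lt ih

lemma ringCoord_busRotation_pow {B : ℕ} {x : Fin (2 * B)} (hx : x.1 + 1 < 2 * B) (c : ℕ) :
    ringCoord B ((busRotation B ^ c) x) = ringCoord B x + c := by
  induction c with
  | zero => simp
  | succ c ih =>
    rw [pow_succ', Perm.mul_apply, ringCoord_busRotation (busRotation_pow_apply_val_lt hx c), ih,
      Nat.cast_succ, add_assoc]

lemma eq_of_natCast_eq_natCast {n a b : ℕ} (ha : a < n) (hb : b < n)
    (h : (a : ZMod n) = b) : a = b := by
  rwa [ZMod.natCast_eq_natCast_iff', Nat.mod_eq_of_lt ha, Nat.mod_eq_of_lt hb] at h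

lemma ringCoord_injOn {B : ℕ} {x y : Fin (2 * B)} (hx : x.1 + 1 < 2 * B) (hy : y.1 + 1 < 2 * B)
    (h : ringCoord B x = ringCoord B y) : x = y := by
  have := eq_of_natCast_eq_natCast (ringIndex_lt hx) (ringIndex_lt hy) h
  ext
  unfold ringIndex at this
  split_ifs at this <;> omega

lemma eq_one_or_eq_add_one_of_natCast_eq_one {n s : ℕ} (hn : 1 < n) (hs : s < 2 * n)
    (h : (s : ZMod n) = 1) : s = 1 ∨ s = n + 1 := by
  rw [← Nat.cast_one] at h
  rcases lt_or_ge s n with hlt | hge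
  · exact .inl (eq_of_natCast_eq_natCast hlt hn h)
  · have : ((s - n : ℕ) : ZMod n) = (1 : ℕ) := by
      rw [Nat.cast_sub hge, ZMod.natCast_self, sub_zero, h]
    have := eq_of_natCast_eq_natCast (by omega) hn this
    omega

lemma exists_onBus_of_ringCoord_add_eq_one {B : ℕ} {x y : Fin (2 * B)} (hx : x.1 + 1 < 2 * B)
    (hy : y.1 + 1 < 2 * B) (hxy : x ≠ y) (h : ringCoord B x + ringCoord B y = 1) :
    ∃ j < B, OnBus B j x y := by
  have hxy' : x.1 ≠ y.1 := Fin.val_ne_of_ne hxy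
  have hsum := eq_one_or_eq_add_one_of_natCast_eq_one (by omega)
    (by have := ringIndex_lt hx; have := ringIndex_lt hy; omega)
    ((Nat.cast_add _ _).trans h)
  refine ⟨x.1 / 2, by omega, ?_⟩
  unfold OnBus
  unfold ringIndex at hsum
  split_ifs at hsum <;> omega

lemma two_mul_natCast_eq_one {B : ℕ} (hB : 0 < B) : (2 * B : ZMod (2 * B - 1)) = 1 := by
  have := ZMod.natCast_self (2 * B - 1)
  rw [Nat.cast_sub (by omega)] at this
  push_cast at this
  linear_combination this

lemma exists_busRotation_pow_apply_eq {B : ℕ} {x y : Fin (2 * B)} (hx : x.1 + 1 < 2 * B)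
    (hy : y.1 + 1 < 2 * B) : ∃ c < 2 * B - 1, (busRotation B ^ c) x = y := by
  have : NeZero (2 * B - 1) := ⟨by omega⟩
  refine ⟨(ringCoord B y - ringCoord B x).val, ZMod.val_lt _,
    ringCoord_injOn (busRotation_pow_apply_val_lt hx _) hy ?_⟩
  rw [ringCoord_busRotation_pow hx, ZMod.natCast_zmod_val]
  ring

lemma exists_onBus_busRotation_pow {B : ℕ} {a b : Fin (2 * B)} (hab : a ≠ b) :
    ∃ c < 2 * B - 1, ∃ j < B, OnBus B j ((busRotation B ^ c) a) ((busRotation B ^ c) b) := by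
  have hB : 0 < B := by have := a.2; omega
  wlog hb : b.1 + 1 < 2 * B generalizing a b
  · obtain ⟨c, hc, j, hj, h⟩ := this hab.symm (by have := Fin.val_ne_of_ne hab; omega)
    exact ⟨c, hc, j, hj, h.symm⟩
  by_cases ha : a.1 + 1 < 2 * B
  · have : NeZero (2 * B - 1) := ⟨by omega⟩
    set c := (B * (1 - ringCoord B a - ringCoord B b) : ZMod (2 * B - 1)).val
    refine ⟨c, ZMod.val_lt _, exists_onBus_of_ringCoord_add_eq_one
      (busRotation_pow_apply_val_lt ha c) (busRotation_pow_apply_val_lt hb c)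
      ((busRotation B ^ c).injective.ne hab) ?_⟩
    rw [ringCoord_busRotation_pow ha, ringCoord_busRotation_pow hb, ZMod.natCast_zmod_val]
    linear_combination (1 - ringCoord B a - ringCoord B b) * two_mul_natCast_eq_one hB
  · obtain ⟨c, hc, hbc⟩ : ∃ c < 2 * B - 1, ((busRotation B ^ c) b).1 = 2 * B - 2 := by
      obtain ⟨c, hc, h⟩ := exists_busRotation_pow_apply_eq (y := ⟨2 * B - 2, by omega⟩) hb
        (by dsimp only; omega)
      exact ⟨c, hc, by rw [h]⟩
    refine ⟨c, hc, B - 1, by omega, .inr ⟨?_, by omega⟩⟩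
    rw [Perm.pow_apply_eq_self_of_apply_eq_self (busRotation_apply_last (by omega)) c]
    omega

theorem busNNN_full_connectivity_general (B : ℕ) :
    ∀ a b : Fin (2 * B), a ≠ b → ∃ t ≤ 4 * B - 5, ∃ j < B,
      OnBus B j (cumul (busLayers B) t a) (cumul (busLayers B) t b) := by
  intro a b hab
  obtain ⟨c, hc, j, hj, hbus⟩ := exists_onBus_busRotation_pow hab
  rcases c with _ | c
  · exact ⟨0, by omega, j, hj, hbus⟩
  · exact ⟨2 * c + 1, by omega, j, hj, onBus_cumul_busLayers_odd_iff.2 hbus⟩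

/-- For every `B ≥ 2`, the busNNN swap strategy run for `4B - 5`
layers reaches full connectivity: for every pair of distinct columns `a ≠ b` there
is a time `t ≤ 4B - 5` such that `σ_t a` and `σ_t b` lie on a common bus `j < B`. -/
theorem busNNN_full_connectivity (B : ℕ) (hB : 2 ≤ B) :
    ∀ a b : Fin (2 * B), a ≠ b → ∃ t ≤ 4 * B - 5, ∃ j < B,
      OnBus B j (cumul (busLayers B) t a) (cumul (busLayers B) t b) :=
  busNNN_full_connectivity_general B
end

section
/- For every natural number B ≥ 2 and every bus j ∈ {0,…,B−1}, the unordered pairs of columns occupying bus j at the successive double-steps of the busNNN swap strategy are pairwise distinct over one full period: the map sending t ∈ {0,…,2B−2} to the unordered pair {σ^{−t}(2j), σ^{−t}(2j+1)} is injective, where σ = A ∘ I. -/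
/-!
`busStep B = intraLayer B * interLayer B` fixes the last position `2B-1` and permutes the other
`2B-1` positions in one cycle (odd positions upwards, then even positions downwards); `cycleCoord`
is a coordinate on that cycle which the step shifts by one. If the pairs on bus `j` at times
`t₁ ≤ t₂` agree, then `g = busStep B ^ (t₂ - t₁)` maps `{2j, 2j+1}` onto itself, so `g²` fixes `2j`.
As `2j` lies on the cycle, `2B-1 ∣ 2(t₂ - t₁)`, and since `2B-1` is odd, `2B-1 ∣ t₂ - t₁ < 2B-1`.
-/

open Equiv

namespace Equiv.Perm

variable {ι α : Type*} [DecidableEq α]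

theorem prod_map_swap_apply_of_forall_ne (f g : ι → α) {l : List ι} {x : α}
    (h : ∀ i ∈ l, f i ≠ x ∧ g i ≠ x) : (l.map fun i => swap (f i) (g i)).prod x = x := by
  induction l with
  | nil => rfl
  | cons i l ih =>
    rw [List.map_cons, List.prod_cons, mul_apply, ih fun k hk => h k (List.mem_cons_of_mem _ hk)]
    obtain ⟨hf, hg⟩ := h i List.mem_cons_self
    exact swap_apply_of_ne_of_ne hf.symm hg.symm

theorem prod_map_swap_apply_of_mem (f g : ι → α) {l : List ι} (hl : l.Nodup) {i₀ : ι}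
    (hi₀ : i₀ ∈ l) (hdisj : ∀ i ∈ l, i ≠ i₀ → ∀ z, z = f i₀ ∨ z = g i₀ → f i ≠ z ∧ g i ≠ z)
    {x : α} (hx : x = f i₀ ∨ x = g i₀) :
    (l.map fun i => swap (f i) (g i)).prod x = swap (f i₀) (g i₀) x := by
  induction l with
  | nil => cases hi₀
  | cons i l ih =>
    rw [List.nodup_cons] at hl
    rw [List.map_cons, List.prod_cons, mul_apply]
    by_cases hi : i = i₀
    · subst hi
      rw [prod_map_swap_apply_of_forall_ne f g fun k hk =>
        hdisj k (List.mem_cons_of_mem _ hk) (fun h => hl.1 (h ▸ hk)) x hx]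
    · have hswap : swap (f i₀) (g i₀) x = f i₀ ∨ swap (f i₀) (g i₀) x = g i₀ := by
        rcases hx with rfl | rfl <;> simp
      rw [ih hl.2 ((List.mem_cons.mp hi₀).resolve_left (Ne.symm hi))
        fun k hk => hdisj k (List.mem_cons_of_mem _ hk)]
      obtain ⟨hf, hg⟩ := hdisj i List.mem_cons_self hi _ hswap
      exact swap_apply_of_ne_of_ne hf.symm hg.symm

theorem sq_apply_eq_self_of_pair_eq (a k : Perm α) {x y : α}
    (h : ({a x, a y} : Finset α) = {a (k x), a (k y)}) : (k ^ 2) x = x := by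
  have hpair : ({x, y} : Finset α) = {k x, k y} :=
    Finset.image_injective a.injective (by simpa [Finset.image_insert] using h)
  have hx : x ∈ ({k x, k y} : Finset α) := hpair ▸ by simp
  have hy : y ∈ ({k x, k y} : Finset α) := hpair ▸ by simp
  simp only [Finset.mem_insert, Finset.mem_singleton] at hx hy
  rw [sq, mul_apply]
  rcases hx with hx | hx
  · rw [← hx, ← hx]
  · rcases hy with hy | hy
    · rw [← hy, hx]
    · obtain rfl : x = y := hx.trans hy.symm
      rw [← hy, ← hy]

theorem eq_of_pair_pow_eq {g : Perm α} {x y : α} {n : ℕ} (hn : Odd n)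
    (hx : ∀ m, (g ^ m) x = x → n ∣ m) {t₁ t₂ : ℕ} (h₁ : t₁ < n) (h₂ : t₂ < n)
    (h : ({(g ^ t₁) x, (g ^ t₁) y} : Finset α) = {(g ^ t₂) x, (g ^ t₂) y}) : t₁ = t₂ := by
  wlog hle : t₁ ≤ t₂ generalizing t₁ t₂
  · exact (this h₂ h₁ h.symm (le_of_not_ge hle)).symm
  obtain ⟨d, rfl⟩ := Nat.exists_eq_add_of_le hle
  simp only [pow_add, mul_apply] at h
  have hd : n ∣ 2 * d := hx _ (by rw [pow_mul']; exact sq_apply_eq_self_of_pair_eq _ _ h)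
  have hd : n ∣ d := (Nat.coprime_two_right.mpr hn).dvd_of_dvd_mul_left hd
  rw [Nat.eq_zero_of_dvd_of_lt hd (by omega), add_zero]

end Equiv.Perm

def swapLayer (N m r : ℕ) (h : 2 * m + r ≤ N) : Perm (Fin N) :=
  ((List.range m).attach.map fun j =>
    swap (⟨2 * j.1 + r, by have := List.mem_range.mp j.2; omega⟩ : Fin N)
      ⟨2 * j.1 + r + 1, by have := List.mem_range.mp j.2; omega⟩).prod

theorem swapLayer_apply_val {N m r : ℕ} (h : 2 * m + r ≤ N) (c : Fin N) :
    (swapLayer N m r h c : ℕ) =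
      if r ≤ (c : ℕ) ∧ (c : ℕ) < 2 * m + r then
        (if ((c : ℕ) - r) % 2 = 0 then (c : ℕ) + 1 else (c : ℕ) - 1)
      else (c : ℕ) := by
  have hnodup := List.nodup_attach.mpr (List.nodup_range (n := m))
  by_cases hc : r ≤ (c : ℕ) ∧ (c : ℕ) < 2 * m + r
  · obtain ⟨i, hi, hci⟩ : ∃ i < m, (c : ℕ) = 2 * i + r ∨ (c : ℕ) = 2 * i + r + 1 :=
      ⟨((c : ℕ) - r) / 2, by omega, by omega⟩
    rw [if_pos hc, swapLayer, Perm.prod_map_swap_apply_of_mem _ _ hnodup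
      (List.mem_attach _ ⟨i, List.mem_range.mpr hi⟩) ?_ (hci.imp Fin.ext Fin.ext)]
    · rcases hci with hci | hci
      · rw [show c = ⟨2 * i + r, by omega⟩ from Fin.ext hci, swap_apply_left]
        dsimp only
        split_ifs <;> omega
      · rw [show c = ⟨2 * i + r + 1, by omega⟩ from Fin.ext hci, swap_apply_right]
        dsimp only
        split_ifs <;> omega
    · rintro ⟨k, hk⟩ - hne z (rfl | rfl) <;>
      · have : k ≠ i := fun h => hne (Subtype.ext h)
        simp only [ne_eq, Fin.ext_iff]
        omega
  · rw [if_neg hc, swapLayer, Perm.prod_map_swap_apply_of_forall_ne]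
    rintro ⟨k, hk⟩ -
    have := List.mem_range.mp hk
    simp only [ne_eq, Fin.ext_iff]
    omega

theorem interLayer_eq_swapLayer {B : ℕ} (hB : 0 < B) :
    interLayer B = swapLayer (2 * B) (B - 1) 1 (by omega) := rfl

theorem intraLayer_eq_swapLayer {B : ℕ} (hB : 0 < B) :
    intraLayer B = swapLayer (2 * B) (B - 1) 0 (by omega) := rfl

def busStep (B : ℕ) : Perm (Fin (2 * B)) := intraLayer B * interLayer B

theorem busStep_apply_val {B : ℕ} (hB : 2 ≤ B) (c : Fin (2 * B)) :
    (busStep B c : ℕ) =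
      if (c : ℕ) = 2 * B - 1 then (c : ℕ)
      else if (c : ℕ) % 2 = 1 then min ((c : ℕ) + 2) (2 * B - 2)
      else if (c : ℕ) = 0 then 1 else (c : ℕ) - 2 := by
  rw [busStep, Perm.mul_apply, intraLayer_eq_swapLayer (by omega),
    interLayer_eq_swapLayer (by omega), swapLayer_apply_val, swapLayer_apply_val]
  split_ifs <;> omega

/-- The coordinate `k` of `c` on the `(2B-1)`-cycle
`0 → 1 → 3 → ⋯ → 2B-3 → 2B-2 → 2B-4 → ⋯ → 2 → 0` of `busStep B`, i.e. `c = busStep B ^ k 0`. -/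
def cycleCoord (B : ℕ) (c : Fin (2 * B)) : ZMod (2 * B - 1) :=
  if (c : ℕ) % 2 = 1 then (((c : ℕ) + 1) / 2 : ℕ) else -(((c : ℕ) / 2 : ℕ) : ZMod (2 * B - 1))

theorem cycleCoord_of_val_eq_odd {B i : ℕ} {c : Fin (2 * B)} (hc : (c : ℕ) = 2 * i + 1) :
    cycleCoord B c = i + 1 := by
  rw [cycleCoord, if_pos (by omega), show ((c : ℕ) + 1) / 2 = i + 1 by omega, Nat.cast_succ]

theorem cycleCoord_of_val_eq_even {B i : ℕ} {c : Fin (2 * B)} (hc : (c : ℕ) = 2 * i) :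
    cycleCoord B c = -i := by
  rw [cycleCoord, if_neg (by omega), show (c : ℕ) / 2 = i by omega]

theorem cycleCoord_busStep {B : ℕ} (hB : 2 ≤ B) {c : Fin (2 * B)} (hc : (c : ℕ) ≠ 2 * B - 1) :
    cycleCoord B (busStep B c) = cycleCoord B c + 1 := by
  have hstep := busStep_apply_val hB c
  obtain ⟨i, hi | hi⟩ := Nat.even_or_odd' (c : ℕ)
  · rw [cycleCoord_of_val_eq_even hi]
    rcases i with _ | i
    · rw [cycleCoord_of_val_eq_odd (i := 0) (by rw [hstep]; split_ifs <;> omega)]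
      simp
    · rw [cycleCoord_of_val_eq_even (i := i) (by rw [hstep]; split_ifs <;> omega)]
      push_cast
      ring
  · rw [cycleCoord_of_val_eq_odd hi]
    by_cases hlast : i + 2 < B
    · rw [cycleCoord_of_val_eq_odd (i := i + 1) (by rw [hstep]; split_ifs <;> omega)]
      push_cast
      ring
    · rw [cycleCoord_of_val_eq_even (i := i + 1) (by rw [hstep]; split_ifs <;> omega)]
      -- the cycle closes up here: `-(B - 1) = B` in `ZMod (2B - 1)`
      have hzero : ((2 * i + 3 : ℕ) : ZMod (2 * B - 1)) = 0 := by
        rw [show 2 * i + 3 = 2 * B - 1 by omega]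
        exact ZMod.natCast_self _
      push_cast at hzero ⊢
      linear_combination -hzero

theorem busStep_pow_apply_val_ne {B : ℕ} (hB : 2 ≤ B) {c : Fin (2 * B)}
    (hc : (c : ℕ) ≠ 2 * B - 1) (m : ℕ) : ((busStep B ^ m) c : ℕ) ≠ 2 * B - 1 := by
  have hfix : busStep B ⟨2 * B - 1, by omega⟩ = ⟨2 * B - 1, by omega⟩ :=
    Fin.ext (by rw [busStep_apply_val hB, if_pos rfl])
  intro h
  have : (busStep B ^ m) c = (busStep B ^ m) ⟨2 * B - 1, by omega⟩ := by
    rw [Perm.pow_apply_eq_self_of_apply_eq_self hfix]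
    exact Fin.ext h
  exact hc (congrArg Fin.val ((busStep B ^ m).injective this))

theorem cycleCoord_busStep_pow {B : ℕ} (hB : 2 ≤ B) {c : Fin (2 * B)}
    (hc : (c : ℕ) ≠ 2 * B - 1) (m : ℕ) :
    cycleCoord B ((busStep B ^ m) c) = cycleCoord B c + m := by
  induction m with
  | zero => simp
  | succ m ih =>
    rw [pow_succ', Perm.mul_apply, cycleCoord_busStep hB (busStep_pow_apply_val_ne hB hc m), ih]
    push_cast
    ring

theorem dvd_of_busStep_pow_apply_eq_self {B : ℕ} (hB : 2 ≤ B) {c : Fin (2 * B)}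
    (hc : (c : ℕ) ≠ 2 * B - 1) {m : ℕ} (h : (busStep B ^ m) c = c) : 2 * B - 1 ∣ m := by
  have := cycleCoord_busStep_pow hB hc m
  rw [h, left_eq_add] at this
  exact (ZMod.natCast_eq_zero_iff m _).mp this

/-- For every `B ≥ 2` and every bus `j < B`, the unordered pairs of
columns occupying bus `j` at the successive double-steps of the busNNN strategy are
pairwise distinct over one full period: the map sending `t ∈ {0, …, 2B-2}` to the
unordered pair `{σ⁻ᵗ (2j), σ⁻ᵗ (2j+1)}` is injective, where `σ = A ∘ I`. -/
theorem busNNN_bus_pairs_distinct (B : ℕ) (hB : 2 ≤ B) (j : ℕ) (hj : j < B) :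
    ∀ t₁ t₂ : ℕ, t₁ ≤ 2 * B - 2 → t₂ ≤ 2 * B - 2 →
      ({((intraLayer B * interLayer B)⁻¹ ^ t₁) ⟨2 * j, by omega⟩,
        ((intraLayer B * interLayer B)⁻¹ ^ t₁) ⟨2 * j + 1, by omega⟩} : Finset (Fin (2 * B))) =
      ({((intraLayer B * interLayer B)⁻¹ ^ t₂) ⟨2 * j, by omega⟩,
        ((intraLayer B * interLayer B)⁻¹ ^ t₂) ⟨2 * j + 1, by omega⟩} : Finset (Fin (2 * B))) →
      t₁ = t₂ := by
  intro t₁ t₂ h₁ h₂ hpair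
  refine Perm.eq_of_pair_pow_eq (n := 2 * B - 1) ⟨B - 1, by omega⟩ (fun m hm => ?_)
    (by omega) (by omega) hpair
  refine dvd_of_busStep_pow_apply_eq_self hB (c := ⟨2 * j, by omega⟩) (by dsimp only; omega) ?_
  rwa [inv_pow, Perm.inv_eq_iff_eq, eq_comm] at hm
end
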